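/- (He–Hua diameter upper bound for trees.) Let Γ=(V,E) be a finite tree with at least two vertices, let B ⊆ V be the set of vertices of degree one, and let L = max{ d_Γ(v,w) : v,w∈V } be the diameter of Γ, where d_Γ is the graph distance. Then σ₁(Γ,B) ≤ 2/L. -/

import Mathlib

/-! Discrete Steklov eigenvalues of graphs with boundary. -/

namespace DiscreteSteklov

variable {V : Type*}

/-- The squared difference of a function `u` across an unordered edge. -/
noncomputable def edgeEnergy (u : V → ℝ) : Sym2 V → ℝ :=
  Sym2.lift ⟨fun i j => (u i - u j) ^ 2, by intro i j; ring⟩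

/-- The Dirichlet energy of `u` with respect to the edge set `E'`. -/
noncomputable def energy (E' : Set (Sym2 V)) (u : V → ℝ) : ℝ :=
  ∑ᶠ e ∈ E', edgeEnergy u e

/-- The squared `L²` norm of `u` on the boundary `B`. -/
noncomputable def boundaryNorm (B : Set V) (u : V → ℝ) : ℝ :=
  ∑ᶠ i ∈ B, u i ^ 2

/-- The space of real-valued functions on `S`, realised as the subspace of
functions on `V` vanishing outside of `S`. -/
def funcsOn (S : Set V) : Submodule ℝ (V → ℝ) where
  carrier := {u | ∀ v ∉ S, u v = 0}
  add_mem' := by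
    intro a b ha hb v hv
    simp [ha v hv, hb v hv]
  zero_mem' := fun v _ => rfl
  smul_mem' := by
    intro c a ha v hv
    simp [ha v hv]

/-- Restriction of functions to the boundary `B`, as a linear map. -/
def restrictTo (B : Set V) : (V → ℝ) →ₗ[ℝ] (↥B → ℝ) :=
  LinearMap.funLeft ℝ ℝ (Subtype.val : ↥B → V)

/-- The `k`-th min-max Steklov eigenvalue of the graph with boundary having
vertex set `Ωbar`, edge set `E'` and boundary `B`: the minimum over all
`(k+1)`-dimensional subspaces `F` of functions on `Ωbar` whose space of
restrictions to `B` is also `(k+1)`-dimensional, of the maximum of the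
Rayleigh quotient over members of `F` whose restriction to `B` is not
identically `0`. -/
noncomputable def steklov (E' : Set (Sym2 V)) (Ωbar B : Set V) (k : ℕ) : ℝ :=
  sInf { t : ℝ | ∃ F : Submodule ℝ (V → ℝ), F ≤ funcsOn Ωbar ∧
    Module.finrank ℝ ↥F = k + 1 ∧
    Module.finrank ℝ ↥(F.map (restrictTo B)) = k + 1 ∧
    t = sSup { r : ℝ | ∃ u ∈ F, restrictTo B u ≠ 0 ∧
      r = energy E' u / boundaryNorm B u } }

/-- The vertex boundary `δΩ` of a set `Ω` of vertices of `G`. -/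
def vertexBoundary (G : SimpleGraph V) (Ω : Set V) : Set V :=
  {i | i ∉ Ω ∧ ∃ j ∈ Ω, G.Adj j i}

/-- The set of edges of `G` with at least one endpoint in `Ω`. -/
def incidentEdges (G : SimpleGraph V) (Ω : Set V) : Set (Sym2 V) :=
  {e | e ∈ G.edgeSet ∧ ∃ v ∈ Ω, v ∈ e}

end DiscreteSteklov

open DiscreteSteklov

namespace HeHuaAux

open SimpleGraph

variable {V : Type*} {G : SimpleGraph V}

lemma finsum_mem_finite {α : Type*} {M : Type*} [AddCommMonoid M] {s : Set α}
    (hs : s.Finite) (f : α → M) : ∑ᶠ i ∈ s, f i = ∑ i ∈ hs.toFinset, f i := by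
  rw [← finsum_mem_coe_finset, hs.coe_toFinset]

lemma edgeEnergy_mk (u : V → ℝ) (a b : V) : edgeEnergy u s(a, b) = (u a - u b) ^ 2 := rfl

lemma dist_add_dist_le_length {b t a : V} (q : G.Walk b t) (ha : a ∈ q.support) :
    G.dist b a + G.dist a t ≤ q.length := by
  classical
  have hspec := q.take_spec ha
  have : (q.takeUntil a ha).length + (q.dropUntil a ha).length = q.length := by
    rw [← SimpleGraph.Walk.length_append, hspec]
  have h1 := SimpleGraph.dist_le (q.takeUntil a ha)
  have h2 := SimpleGraph.dist_le (q.dropUntil a ha)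
  omega

lemma adj_dist_ne (hconn : G.Connected) (hacyc : G.IsAcyclic) {a b : V}
    (hadj : G.Adj a b) (x : V) : G.dist a x ≠ G.dist b x := by
  intro h
  obtain ⟨p, hp, hpl⟩ := hconn.exists_path_of_dist a x
  obtain ⟨q, hq, hql⟩ := hconn.exists_path_of_dist b x
  have hab : a ≠ b := hadj.ne
  have hanq : a ∉ q.support := by
    intro ha
    have h1 : G.dist b a + G.dist a x ≤ q.length := dist_add_dist_le_length q ha
    have h2 : 0 < G.dist b a := hconn.pos_dist_of_ne (Ne.symm hab)
    omega
  have hw : (SimpleGraph.Walk.cons hadj q).IsPath := hq.cons hanq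
  have heq := hacyc.path_unique ⟨p, hp⟩ ⟨SimpleGraph.Walk.cons hadj q, hw⟩
  have hlen : p.length = (SimpleGraph.Walk.cons hadj q).length :=
    congrArg (fun r : G.Path a x => r.1.length) heq
  rw [SimpleGraph.Walk.length_cons] at hlen
  omega

lemma uniqueDescent (hconn : G.Connected) (hacyc : G.IsAcyclic) {a a' b y : V}
    (h1 : G.Adj a a') (h2 : G.Adj a b) (hne : a' ≠ b)
    (hy1 : G.dist a' y + 1 = G.dist a y) (hy2 : G.dist b y + 1 = G.dist a y) : False := by
  obtain ⟨q₁, hq₁, hl₁⟩ := hconn.exists_path_of_dist a' y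
  obtain ⟨q₂, hq₂, hl₂⟩ := hconn.exists_path_of_dist b y
  have hanq₁ : a ∉ q₁.support := by
    intro ha
    have := dist_add_dist_le_length q₁ ha
    omega
  have hanq₂ : a ∉ q₂.support := by
    intro ha
    have := dist_add_dist_le_length q₂ ha
    omega
  have hw₁ : (SimpleGraph.Walk.cons h1 q₁).IsPath := hq₁.cons hanq₁
  have hw₂ : (SimpleGraph.Walk.cons h2 q₂).IsPath := hq₂.cons hanq₂
  have heq := hacyc.path_unique ⟨SimpleGraph.Walk.cons h1 q₁, hw₁⟩
    ⟨SimpleGraph.Walk.cons h2 q₂, hw₂⟩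
  have hsupp : (SimpleGraph.Walk.cons h1 q₁).support = (SimpleGraph.Walk.cons h2 q₂).support :=
    congrArg (fun r : G.Path a y => r.1.support) heq
  rw [SimpleGraph.Walk.support_cons, SimpleGraph.Walk.support_cons,
    q₁.support_eq_cons, q₂.support_eq_cons] at hsupp
  exact hne (by injection (by injection hsupp))

lemma claimC (hconn : G.Connected) (hacyc : G.IsAcyclic) :
    ∀ (k : ℕ) {a b x y : V}, G.dist x a = k → G.Adj a b → G.dist x b = G.dist x a + 1 →
      G.dist a y = G.dist b y + 1 → G.dist x a + G.dist a y = G.dist x y := by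
  intro k
  induction k with
  | zero =>
    intro a b x y hk _ _ _
    have hxa : x = a := hconn.dist_eq_zero_iff.mp hk
    subst hxa
    omega
  | succ k ih =>
    intro a b x y hk hadj hxb hay
    obtain ⟨q, hq, hql⟩ := hconn.exists_path_of_dist a x
    have hax : G.dist a x = k + 1 := by rw [SimpleGraph.dist_comm]; exact hk
    cases q with
    | nil => rw [hax] at hql; simp at hql
    | @cons _ a' _ h q' =>
      rw [SimpleGraph.Walk.length_cons, hax] at hql
      have hl' : q'.length = k := by omega
      have hd1 : G.dist x a' = k := by
        have hle : G.dist x a' ≤ k := by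
          rw [SimpleGraph.dist_comm]
          calc G.dist a' x ≤ q'.length := SimpleGraph.dist_le q'
          _ = k := hl'
        have htri : G.dist x a ≤ G.dist x a' + G.dist a' a := hconn.dist_triangle
        have : G.dist a' a = 1 := SimpleGraph.dist_eq_one_iff_adj.mpr h.symm
        omega
      have hne : G.dist a y ≠ G.dist a' y := adj_dist_ne hconn hacyc h y
      have htri1 : G.dist a y ≤ G.dist a' y + 1 := by
        have := hconn.dist_triangle (u := a) (v := a') (w := y)
        have h1 : G.dist a a' = 1 := SimpleGraph.dist_eq_one_iff_adj.mpr h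
        omega
      have htri2 : G.dist a' y ≤ G.dist a y + 1 := by
        have := hconn.dist_triangle (u := a') (v := a) (w := y)
        have h1 : G.dist a' a = 1 := SimpleGraph.dist_eq_one_iff_adj.mpr h.symm
        omega
      rcases (by omega : G.dist a' y + 1 = G.dist a y ∨ G.dist a' y = G.dist a y + 1) with hc | hc
      · exact absurd (uniqueDescent hconn hacyc h hadj
          (by intro hab; rw [hab] at hd1; omega) hc (by omega)) (fun f => f.elim)
      · have := ih (a := a') (b := a) (x := x) (y := y) hd1 h.symm (by omega) hc
        omega

lemma edge_mem_geodesic (hconn : G.Connected) (hacyc : G.IsAcyclic) {x y a b : V}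
    (p : G.Walk x y) (hp : p.IsPath) (hpl : p.length = G.dist x y)
    (hadj : G.Adj a b) (hxb : G.dist x b = G.dist x a + 1)
    (hay : G.dist a y = G.dist b y + 1) : s(a, b) ∈ p.edges := by
  have hC := claimC hconn hacyc (G.dist x a) rfl hadj hxb hay
  obtain ⟨px, hpx, hpxl⟩ := hconn.exists_path_of_dist x a
  obtain ⟨py, hpy, hpyl⟩ := hconn.exists_path_of_dist b y
  set w : G.Walk x y := px.append (SimpleGraph.Walk.cons hadj py) with hwdef
  have hwl : w.length = G.dist x y := by
    rw [hwdef, SimpleGraph.Walk.length_append, SimpleGraph.Walk.length_cons]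
    omega
  have hwp : w.IsPath := w.isPath_of_length_eq_dist hwl
  have heq := hacyc.path_unique ⟨w, hwp⟩ ⟨p, hp⟩
  have hwe : w = p := congrArg (fun r : G.Path x y => r.1) heq
  rw [← hwe, hwdef, SimpleGraph.Walk.edges_append]
  apply List.mem_append_right
  rw [SimpleGraph.Walk.edges_cons]
  exact List.mem_cons_self

end HeHuaAux

open HeHuaAux SimpleGraph

/-- He–Hua diameter upper bound for finite trees, with boundary the set of
vertices of degree one: `σ₁(Γ,B) ≤ 2/L`, where `L` is the diameter of the tree. -/
theorem he_hua_tree_diameter_bound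
    {V : Type*} [Fintype V] (G : SimpleGraph V)
    (hconn : G.Connected) (hacyc : G.IsAcyclic)
    (hcard : 2 ≤ Fintype.card V) :
    steklov G.edgeSet Set.univ {v : V | (G.neighborSet v).ncard = 1} 1 ≤
      2 / ((sSup {n : ℕ | ∃ v w : V, G.dist v w = n} : ℕ) : ℝ) := by
  classical
  set B : Set V := {v : V | (G.neighborSet v).ncard = 1} with hBdef
  set S : Set ℕ := {n : ℕ | ∃ v w : V, G.dist v w = n} with hSdef
  have hSfin : S.Finite := by
    apply (Set.finite_range (fun p : V × V => G.dist p.1 p.2)).subset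
    rintro n ⟨v, w, h⟩
    exact ⟨(v, w), h⟩
  have hV : Nonempty V := Fintype.card_pos_iff.mp (by omega)
  obtain ⟨v0⟩ := hV
  have hSne : S.Nonempty := ⟨G.dist v0 v0, v0, v0, rfl⟩
  set L : ℕ := sSup S with hLdef
  obtain ⟨x, y, hxy⟩ : ∃ v w : V, G.dist v w = L := Nat.sSup_mem hSne hSfin.bddAbove
  have hmax : ∀ v w : V, G.dist v w ≤ L := fun v w => le_csSup hSfin.bddAbove ⟨v, w, rfl⟩
  have hL1 : 1 ≤ L := by
    obtain ⟨v, w, hvw⟩ := Fintype.exists_pair_of_one_lt_card (by omega : 1 < Fintype.card V)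
    have h1 := hconn.pos_dist_of_ne hvw
    have h2 := hmax v w
    omega
  have hyx : G.dist y x = L := by rw [SimpleGraph.dist_comm]; exact hxy
  have hxyne : x ≠ y := by
    intro h
    rw [h, SimpleGraph.dist_self] at hxy
    omega
  -- endpoints of a diameter are leaves
  have leaf : ∀ s t : V, G.dist s t = L → s ∈ B := by
    intro s t hst
    obtain ⟨q, hq, hql⟩ := hconn.exists_path_of_dist s t
    cases q with
    | nil =>
      rw [SimpleGraph.dist_self] at hst
      omega
    | @cons _ z _ h q' =>
      have hz1 : G.dist z t + 1 = G.dist s t := by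
        have hle : G.dist z t ≤ q'.length := SimpleGraph.dist_le q'
        have htri : G.dist s t ≤ G.dist s z + G.dist z t := hconn.dist_triangle
        have h1 : G.dist s z = 1 := SimpleGraph.dist_eq_one_iff_adj.mpr h
        rw [SimpleGraph.Walk.length_cons] at hql
        omega
      have hset : G.neighborSet s = {z} := by
        ext w
        simp only [SimpleGraph.mem_neighborSet, Set.mem_singleton_iff]
        constructor
        · intro hw
          by_contra hwz
          have hne := adj_dist_ne hconn hacyc hw t
          have htri1 : G.dist s t ≤ G.dist w t + 1 := by
            have := hconn.dist_triangle (u := s) (v := w) (w := t)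
            have h1 : G.dist s w = 1 := SimpleGraph.dist_eq_one_iff_adj.mpr hw
            omega
          have hle := hmax w t
          exact uniqueDescent hconn hacyc hw h hwz (by omega) hz1
        · intro hw
          rw [hw]
          exact h
      show (G.neighborSet s).ncard = 1
      rw [hset, Set.ncard_singleton]
  have hxB : x ∈ B := leaf x y hxy
  have hyB : y ∈ B := leaf y x hyx
  -- the test function
  set u : V → ℝ := fun v => ((G.dist v x : ℝ) - (G.dist v y : ℝ)) / 2 with hudef
  have hux : u x = -(L : ℝ) / 2 := by
    show ((G.dist x x : ℝ) - (G.dist x y : ℝ)) / 2 = -(L : ℝ) / 2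
    rw [SimpleGraph.dist_self, hxy]
    push_cast
    ring
  have huy : u y = (L : ℝ) / 2 := by
    show ((G.dist y x : ℝ) - (G.dist y y : ℝ)) / 2 = (L : ℝ) / 2
    rw [SimpleGraph.dist_self, hyx]
    push_cast
    ring
  -- a geodesic from x to y
  obtain ⟨p, hp, hpl⟩ := hconn.exists_path_of_dist x y
  -- edges where u changes lie on the geodesic
  have hEdge : ∀ a b : V, G.Adj a b → u a ≠ u b → s(a, b) ∈ p.edges := by
    intro a b hadj hne
    have hnx := adj_dist_ne hconn hacyc hadj x
    have hny := adj_dist_ne hconn hacyc hadj y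
    have h1 : G.dist a b = 1 := SimpleGraph.dist_eq_one_iff_adj.mpr hadj
    have h1' : G.dist b a = 1 := SimpleGraph.dist_eq_one_iff_adj.mpr hadj.symm
    have htx1 : G.dist a x ≤ G.dist b x + 1 := by
      have := hconn.dist_triangle (u := a) (v := b) (w := x); omega
    have htx2 : G.dist b x ≤ G.dist a x + 1 := by
      have := hconn.dist_triangle (u := b) (v := a) (w := x); omega
    have hty1 : G.dist a y ≤ G.dist b y + 1 := by
      have := hconn.dist_triangle (u := a) (v := b) (w := y); omega
    have hty2 : G.dist b y ≤ G.dist a y + 1 := by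
      have := hconn.dist_triangle (u := b) (v := a) (w := y); omega
    rcases (by omega : G.dist b x = G.dist a x + 1 ∨ G.dist a x = G.dist b x + 1) with hbx | hbx <;>
      rcases (by omega : G.dist b y = G.dist a y + 1 ∨ G.dist a y = G.dist b y + 1) with hby | hby
    · exfalso
      apply hne
      show ((G.dist a x : ℝ) - (G.dist a y : ℝ)) / 2 = ((G.dist b x : ℝ) - (G.dist b y : ℝ)) / 2
      rw [hbx, hby]
      push_cast
      ring
    · exact edge_mem_geodesic hconn hacyc p hp hpl hadj
        (by rw [SimpleGraph.dist_comm (u := x) (v := b), SimpleGraph.dist_comm (u := x) (v := a)]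
            exact hbx) hby
    · rw [Sym2.eq_swap]
      exact edge_mem_geodesic hconn hacyc p hp hpl hadj.symm
        (by rw [SimpleGraph.dist_comm (u := x) (v := a), SimpleGraph.dist_comm (u := x) (v := b)]
            exact hbx) hby
    · exfalso
      apply hne
      show ((G.dist a x : ℝ) - (G.dist a y : ℝ)) / 2 = ((G.dist b x : ℝ) - (G.dist b y : ℝ)) / 2
      rw [hbx, hby]
      push_cast
      ring
  have hEfin : (G.edgeSet).Finite := G.edgeSet.toFinite
  have hBfin : B.Finite := B.toFinite
  have hnn : ∀ (w : V → ℝ) (e : Sym2 V), 0 ≤ edgeEnergy w e := by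
    intro w e
    induction e using Sym2.ind with
    | _ a b => rw [edgeEnergy_mk]; exact sq_nonneg _
  -- energy bound
  have henergy : energy G.edgeSet u ≤ (L : ℝ) := by
    rw [energy, finsum_mem_finite hEfin]
    have step1 : ∑ e ∈ hEfin.toFinset, edgeEnergy u e
        = ∑ e ∈ hEfin.toFinset.filter (· ∈ p.edges), edgeEnergy u e := by
      symm
      apply Finset.sum_filter_of_ne
      intro e he hne
      rw [Set.Finite.mem_toFinset] at he
      induction e using Sym2.ind with
      | _ a b =>
        apply hEdge a b (G.mem_edgeSet.mp he)
        intro hu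
        apply hne
        rw [edgeEnergy_mk, hu]
        ring
    rw [step1]
    have step2 : ∑ e ∈ hEfin.toFinset.filter (· ∈ p.edges), edgeEnergy u e
        ≤ ∑ e ∈ p.edges.toFinset, edgeEnergy u e := by
      apply Finset.sum_le_sum_of_subset_of_nonneg
      · intro e he
        rw [Finset.mem_filter] at he
        exact List.mem_toFinset.mpr he.2
      · intro e _ _
        exact hnn u e
    have step3 : ∑ e ∈ p.edges.toFinset, edgeEnergy u e ≤ ∑ e ∈ p.edges.toFinset, (1 : ℝ) := by
      apply Finset.sum_le_sum
      intro e he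
      rw [List.mem_toFinset] at he
      have hemem : e ∈ G.edgeSet := p.edges_subset_edgeSet he
      revert hemem
      induction e using Sym2.ind with
      | _ a b =>
        intro hemem
        have hadj : G.Adj a b := G.mem_edgeSet.mp hemem
        rw [edgeEnergy_mk]
        have h1 : G.dist a b = 1 := SimpleGraph.dist_eq_one_iff_adj.mpr hadj
        have h1' : G.dist b a = 1 := SimpleGraph.dist_eq_one_iff_adj.mpr hadj.symm
        have htx1 : G.dist a x ≤ G.dist b x + 1 := by
          have := hconn.dist_triangle (u := a) (v := b) (w := x); omega
        have htx2 : G.dist b x ≤ G.dist a x + 1 := by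
          have := hconn.dist_triangle (u := b) (v := a) (w := x); omega
        have hty1 : G.dist a y ≤ G.dist b y + 1 := by
          have := hconn.dist_triangle (u := a) (v := b) (w := y); omega
        have hty2 : G.dist b y ≤ G.dist a y + 1 := by
          have := hconn.dist_triangle (u := b) (v := a) (w := y); omega
        have c1 : (G.dist a x : ℝ) ≤ (G.dist b x : ℝ) + 1 := by exact_mod_cast htx1
        have c2 : (G.dist b x : ℝ) ≤ (G.dist a x : ℝ) + 1 := by exact_mod_cast htx2
        have c3 : (G.dist a y : ℝ) ≤ (G.dist b y : ℝ) + 1 := by exact_mod_cast hty1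
        have c4 : (G.dist b y : ℝ) ≤ (G.dist a y : ℝ) + 1 := by exact_mod_cast hty2
        show (((G.dist a x : ℝ) - (G.dist a y : ℝ)) / 2
          - ((G.dist b x : ℝ) - (G.dist b y : ℝ)) / 2) ^ 2 ≤ 1
        nlinarith [c1, c2, c3, c4]
    have step4 : ∑ e ∈ p.edges.toFinset, (1 : ℝ) = (p.edges.toFinset.card : ℝ) := by simp
    have step5 : (p.edges.toFinset.card : ℝ) ≤ (L : ℝ) := by
      have hcle : p.edges.toFinset.card ≤ p.edges.length := p.edges.toFinset_card_le
      have hlen : p.edges.length = L := by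
        rw [SimpleGraph.Walk.length_edges, hpl, hxy]
      exact_mod_cast hcle.trans (le_of_eq hlen)
    linarith
  -- boundary norm lower bound
  have hbn : ∀ w : V → ℝ, w x ^ 2 + w y ^ 2 ≤ boundaryNorm B w := by
    intro w
    rw [boundaryNorm, finsum_mem_finite hBfin]
    have hsub : ({x, y} : Finset V) ⊆ hBfin.toFinset := by
      intro v hv
      rw [Finset.mem_insert, Finset.mem_singleton] at hv
      rw [Set.Finite.mem_toFinset]
      rcases hv with h | h
      · rw [h]; exact hxB
      · rw [h]; exact hyB
    calc w x ^ 2 + w y ^ 2 = ∑ i ∈ {x, y}, w i ^ 2 := (Finset.sum_pair (f := fun i => w i ^ 2) hxyne).symm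
      _ ≤ ∑ i ∈ hBfin.toFinset, w i ^ 2 :=
        Finset.sum_le_sum_of_subset_of_nonneg hsub (fun i _ _ => sq_nonneg _)
  -- energy scaling
  have hscale : ∀ s t : ℝ, energy G.edgeSet (s • (1 : V → ℝ) + t • u)
      = t ^ 2 * energy G.edgeSet u := by
    intro s t
    rw [energy, energy, finsum_mem_finite hEfin, finsum_mem_finite hEfin, Finset.mul_sum]
    apply Finset.sum_congr rfl
    intro e _
    induction e using Sym2.ind with
    | _ a b =>
      rw [edgeEnergy_mk, edgeEnergy_mk]
      simp only [Pi.add_apply, Pi.smul_apply, Pi.one_apply, smul_eq_mul]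
      ring
  have hLR : (1 : ℝ) ≤ (L : ℝ) := by exact_mod_cast hL1
  have hLne0 : (L : ℝ) ≠ 0 := by linarith
  -- the test subspace
  set bvec : Fin 2 → (V → ℝ) := ![1, u] with hbvec
  have hval : ∀ s t : ℝ, ∀ v : V, (s • (1 : V → ℝ) + t • u) v = s + t * u v := by
    intro s t v
    simp [Pi.add_apply, Pi.smul_apply, Pi.one_apply, smul_eq_mul]
  have hkey : ∀ s t : ℝ, s + t * u x = 0 → s + t * u y = 0 → s = 0 ∧ t = 0 := by
    intro s t e1 e2
    rw [hux] at e1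
    rw [huy] at e2
    have ht : t = 0 := by
      have h3 : t * (L : ℝ) = 0 := by linarith
      rcases mul_eq_zero.mp h3 with h | h
      · exact h
      · exact absurd h hLne0
    constructor
    · rw [ht] at e2; linarith
    · exact ht
  have li : LinearIndependent ℝ bvec := by
    rw [hbvec, LinearIndependent.pair_iff]
    intro s t hst
    have e1 : s + t * u x = 0 := by
      have := congrFun hst x
      rw [hval s t x] at this
      exact this
    have e2 : s + t * u y = 0 := by
      have := congrFun hst y
      rw [hval s t y] at this
      exact this
    exact hkey s t e1 e2
  set F : Submodule ℝ (V → ℝ) := Submodule.span ℝ (Set.range bvec) with hFdef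
  have hr1 : Module.finrank ℝ ↥F = 2 := by
    rw [hFdef, finrank_span_eq_card li, Fintype.card_fin]
  have hfuncs : F ≤ funcsOn Set.univ := by
    intro w _
    intro v hv
    exact absurd (Set.mem_univ v) hv
  set bvec2 : Fin 2 → (↥B → ℝ) := ![restrictTo B (1 : V → ℝ), restrictTo B u] with hbvec2
  have hcomp : (fun i => restrictTo B (bvec i)) = bvec2 := by
    funext i
    fin_cases i <;> rfl
  have hrest : ∀ (w : V → ℝ) (v : V) (hv : v ∈ B), restrictTo B w ⟨v, hv⟩ = w v := fun _ _ _ => rfl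
  have li2 : LinearIndependent ℝ bvec2 := by
    rw [hbvec2, LinearIndependent.pair_iff]
    intro s t hst
    have e1 : s + t * u x = 0 := by
      have := congrFun hst ⟨x, hxB⟩
      simpa [restrictTo, LinearMap.funLeft_apply] using this
    have e2 : s + t * u y = 0 := by
      have := congrFun hst ⟨y, hyB⟩
      simpa [restrictTo, LinearMap.funLeft_apply] using this
    exact hkey s t e1 e2
  have hr2 : Module.finrank ℝ ↥(F.map (restrictTo B)) = 2 := by
    rw [hFdef, Submodule.map_span, ← Set.range_comp]
    have : (restrictTo B ∘ bvec) = bvec2 := hcomp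
    rw [this, finrank_span_eq_card li2, Fintype.card_fin]
  -- bounding the Rayleigh quotients over F
  have hray : ∀ r ∈ { r : ℝ | ∃ w ∈ F, restrictTo B w ≠ 0 ∧
      r = energy G.edgeSet w / boundaryNorm B w }, r ≤ 2 / (L : ℝ) := by
    rintro r ⟨w, hwF, -, rfl⟩
    obtain ⟨c, hc⟩ := (Submodule.mem_span_range_iff_exists_fun ℝ).mp hwF
    rw [Fin.sum_univ_two] at hc
    have hb0 : bvec 0 = (1 : V → ℝ) := rfl
    have hb1 : bvec 1 = u := rfl
    rw [hb0, hb1] at hc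
    set s := c 0 with hs
    set t := c 1 with ht
    have hw : w = s • (1 : V → ℝ) + t • u := hc.symm
    by_cases htz : t = 0
    · rw [hw, hscale, htz]
      norm_num
      positivity
    · have hE : energy G.edgeSet w ≤ t ^ 2 * (L : ℝ) := by
        rw [hw, hscale]
        exact mul_le_mul_of_nonneg_left henergy (sq_nonneg t)
      have hN : t ^ 2 * (L : ℝ) ^ 2 / 2 ≤ boundaryNorm B w := by
        refine le_trans ?_ (hbn w)
        rw [hw, hval s t x, hval s t y, hux, huy]
        nlinarith [sq_nonneg (s : ℝ)]
      have ht2 : (0 : ℝ) < t ^ 2 :=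
        lt_of_le_of_ne (sq_nonneg t) (Ne.symm (pow_ne_zero 2 htz))
      have hLpos : (0 : ℝ) < (L : ℝ) := by linarith
      have hdpos : (0 : ℝ) < t ^ 2 * (L : ℝ) ^ 2 / 2 := by positivity
      calc energy G.edgeSet w / boundaryNorm B w
          ≤ (t ^ 2 * (L : ℝ)) / (t ^ 2 * (L : ℝ) ^ 2 / 2) := div_le_div₀ (by positivity) hE hdpos hN
        _ = 2 / (L : ℝ) := by field_simp
  -- conclusion
  have hbdd : BddBelow { tt : ℝ | ∃ F' : Submodule ℝ (V → ℝ), F' ≤ funcsOn Set.univ ∧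
      Module.finrank ℝ ↥F' = 1 + 1 ∧
      Module.finrank ℝ ↥(F'.map (restrictTo B)) = 1 + 1 ∧
      tt = sSup { r : ℝ | ∃ w ∈ F', restrictTo B w ≠ 0 ∧
        r = energy G.edgeSet w / boundaryNorm B w } } := by
    refine ⟨0, ?_⟩
    rintro tt ⟨F', -, -, -, rfl⟩
    apply Real.sSup_nonneg
    rintro r ⟨w, -, -, rfl⟩
    apply div_nonneg
    · rw [energy, finsum_mem_finite hEfin]
      exact Finset.sum_nonneg fun e _ => hnn w e
    · rw [boundaryNorm, finsum_mem_finite hBfin]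
      exact Finset.sum_nonneg fun i _ => sq_nonneg _
  refine le_trans (csInf_le hbdd ⟨F, hfuncs, hr1, hr2, rfl⟩) ?_
  exact Real.sSup_le hray (by positivity)
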